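/- arXiv:2604.10422 — 4 statements merged into one kernel-verified Lean document; each statement's English description precedes it below -/
import Mathlib

section
/- Let f : ℝ^d → ℝ be μ-strongly convex (μ > 0), let g_1, …, g_q : ℝ^d → ℝ be convex functions such that every subgradient of every g_l at every point has Euclidean norm at most L_g, and let A ∈ ℝ^{p×d}. Suppose x minimizes over ℝ^d the function x ↦ f(x) + ⟨u, A x⟩ + Σ_{l=1}^q y_l g_l(x) with y = (y_1,…,y_q) ∈ ℝ^q_{≥0}, and x' minimizes the corresponding function with multipliers (u', y'), y' ∈ ℝ^q_{≥0}. Then ‖x − x'‖ ≤ (√(‖A‖² + q L_g²)/μ) · ‖(u − u', y − y')‖, where ‖A‖ denotes the operator (spectral) norm of A and the norm on the right is the Euclidean norm of the concatenated vector in ℝ^{p+q}. -/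
/-!
Both Lagrangians are `μ`-strongly convex, so quadratic growth at the two minimizers gives
`μ ‖x - x'‖² ≤ ⟪u - u', A (x' - x)⟫ + ∑ l, (y l - y' l) (g l x' - g l x)`. Subgradients exist
(Hahn–Banach separation of a point from the strict epigraph) and are bounded by `Lg`, so each
`g l` is `Lg`-Lipschitz; two Cauchy–Schwarz steps then bound the right-hand side by
`√(‖A‖² + q Lg²) ‖(u - u', y - y')‖ ‖x - x'‖`.
-/

open RealInnerProductSpace Finset

def IsSubgradientAt {E : Type*} [NormedAddCommGroup E] [InnerProductSpace ℝ E]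
    (g : E → ℝ) (s : E) (x : E) : Prop :=
  ∀ y, g y ≥ g x + ⟪s, y - x⟫

open Filter Topology

lemma ConvexOn.finset_sum {ι E : Type*} [AddCommGroup E] [Module ℝ E] {s : Set E}
    (hs : Convex ℝ s) (t : Finset ι) {f : ι → E → ℝ} (hf : ∀ i ∈ t, ConvexOn ℝ s (f i)) :
    ConvexOn ℝ s (fun x => ∑ i ∈ t, f i x) := by
  classical
  induction t using Finset.induction_on with
  | empty => simpa using convexOn_const (0 : ℝ) hs
  | insert i t hi ih =>
    simp only [Finset.sum_insert hi]
    exact (hf i (mem_insert_self i t)).add (ih fun j hj => hf j (mem_insert_of_mem hj))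

lemma StrongConvexOn.add_convexOn {E : Type*} [NormedAddCommGroup E] [NormedSpace ℝ E]
    {s : Set E} {m : ℝ} {f g : E → ℝ} (hf : StrongConvexOn s m f) (hg : ConvexOn ℝ s g) :
    StrongConvexOn s m (f + g) := by
  unfold StrongConvexOn
  simpa using hf.add hg.uniformConvexOn_zero

section StrongConvexity

variable {E : Type*} [NormedAddCommGroup E] [NormedSpace ℝ E] {s : Set E} {m : ℝ} {f : E → ℝ}
  {x w : E}

lemma StrongConvexOn.add_mul_sq_norm_sub_le_of_isMinOn (hf : StrongConvexOn s m f)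
    (hmin : IsMinOn f s x) (hx : x ∈ s) (hw : w ∈ s) :
    f x + m / 2 * ‖w - x‖ ^ 2 ≤ f w := by
  -- strong convexity on the segment `[x, w]`, then `t → 0`
  have hc : ∀ t ∈ Set.Ioo (0 : ℝ) 1, (1 - t) * (m / 2 * ‖w - x‖ ^ 2) ≤ f w - f x := by
    rintro t ⟨ht₀, ht₁⟩
    have hconv := hf.2 hw hx ht₀.le (sub_nonneg.2 ht₁.le) (add_sub_cancel t 1)
    have hle := hmin (hf.1 hw hx ht₀.le (sub_nonneg.2 ht₁.le) (add_sub_cancel t 1))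
    simp only [smul_eq_mul, Set.mem_ofPred_eq] at hconv hle
    have : t * ((1 - t) * (m / 2 * ‖w - x‖ ^ 2)) ≤ t * (f w - f x) := by nlinarith
    exact le_of_mul_le_mul_left this ht₀
  have hlim : Tendsto (fun t : ℝ => (1 - t) * (m / 2 * ‖w - x‖ ^ 2)) (𝓝[>] 0)
      (𝓝 ((1 - 0) * (m / 2 * ‖w - x‖ ^ 2))) :=
    ((continuous_const.sub continuous_id).mul continuous_const).continuousWithinAt
  have := le_of_tendsto hlim (eventually_of_mem (Ioo_mem_nhdsGT zero_lt_one) hc)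
  linarith

lemma StrongConvexOn.mul_sq_norm_sub_le_of_isMinOn {g : E → ℝ} {y : E}
    (hf : StrongConvexOn s m f) (hg : StrongConvexOn s m g)
    (hfx : IsMinOn f s x) (hgy : IsMinOn g s y) (hx : x ∈ s) (hy : y ∈ s) :
    m * ‖x - y‖ ^ 2 ≤ (f y - g y) - (f x - g x) := by
  have h₁ := hf.add_mul_sq_norm_sub_le_of_isMinOn hfx hx hy
  have h₂ := hg.add_mul_sq_norm_sub_le_of_isMinOn hgy hy hx
  rw [norm_sub_rev] at h₁
  linarith

end StrongConvexity

lemma ConvexOn.exists_continuousLinearMap_le {F : Type*} [NormedAddCommGroup F] [NormedSpace ℝ F]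
    {g : F → ℝ} (hg : ConvexOn ℝ Set.univ g) (hc : Continuous g) (x₀ : F) :
    ∃ ℓ : F →L[ℝ] ℝ, ∀ w, ℓ (w - x₀) ≤ g w - g x₀ := by
  have hconv : Convex ℝ {p : F × ℝ | g p.1 < p.2} := by
    simpa using hg.convex_strict_epigraph
  have hopen : IsOpen {p : F × ℝ | g p.1 < p.2} := isOpen_lt (hc.comp continuous_fst) continuous_snd
  -- the separating functional `φ (w, t) = ψ w + t a` has `a < 0`; `-ψ / a` is the slope
  obtain ⟨φ, hφ⟩ := geometric_hahn_banach_open_point hconv hopen (x := (x₀, g x₀)) (by simp)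
  set ψ := φ.comp (ContinuousLinearMap.inl ℝ F ℝ)
  set a := φ (0, 1)
  have hsplit : ∀ w t, φ (w, t) = ψ w + t * a := by
    intro w t
    rw [show ((w, t) : F × ℝ) = (w, 0) + t • (0, 1) by simp, map_add, map_smul, smul_eq_mul]
    rfl
  have hsep : ∀ w t, g w < t → ψ w + t * a < ψ x₀ + g x₀ * a := by
    intro w t ht
    simpa only [hsplit] using hφ (w, t) ht
  have ha : a < 0 := by
    have := hsep x₀ (g x₀ + 1) (lt_add_one _)
    linarith
  refine ⟨(-a)⁻¹ • ψ, fun w => ?_⟩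
  rw [smul_apply, smul_eq_mul]
  refine le_of_forall_pos_lt_add fun ε hε => ?_
  rw [inv_mul_lt_iff₀ (neg_pos.2 ha), map_sub]
  linarith [hsep w (g w + ε) (lt_add_of_pos_right _ hε)]

section Subgradient

variable {E : Type*} [NormedAddCommGroup E] [InnerProductSpace ℝ E] {g : E → ℝ}

lemma ConvexOn.exists_isSubgradientAt [CompleteSpace E] (hg : ConvexOn ℝ Set.univ g)
    (hc : Continuous g) (x : E) : ∃ s, IsSubgradientAt g s x := by
  obtain ⟨ℓ, hℓ⟩ := hg.exists_continuousLinearMap_le hc x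
  refine ⟨(InnerProductSpace.toDual ℝ E).symm ℓ, fun w => ?_⟩
  rw [InnerProductSpace.toDual_symm_apply]
  linarith [hℓ w]

lemma IsSubgradientAt.sub_le_mul_norm_sub {s x : E} {L : ℝ} (hs : IsSubgradientAt g s x)
    (hL : ‖s‖ ≤ L) (w : E) : g x - g w ≤ L * ‖x - w‖ := by
  have hinner : ⟪s, x - w⟫ ≤ L * ‖x - w‖ :=
    (real_inner_le_norm s _).trans (mul_le_mul_of_nonneg_right hL (norm_nonneg _))
  have := hs w
  rw [← neg_sub x w, inner_neg_right] at this
  linarith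

lemma abs_sub_le_mul_norm_sub_of_isSubgradientAt {L : ℝ}
    (hex : ∀ x, ∃ s, IsSubgradientAt g s x) (hL : ∀ x s, IsSubgradientAt g s x → ‖s‖ ≤ L)
    (x w : E) : |g x - g w| ≤ L * ‖x - w‖ := by
  obtain ⟨s, hs⟩ := hex x
  obtain ⟨s', hs'⟩ := hex w
  rw [abs_sub_le_iff]
  exact ⟨hs.sub_le_mul_norm_sub (hL x s hs) w,
    norm_sub_rev x w ▸ hs'.sub_le_mul_norm_sub (hL w s' hs') x⟩

end Subgradient

lemma EuclideanSpace.sum_mul_le_of_abs_le {ι : Type*} [Fintype ι] (c : EuclideanSpace ℝ ι)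
    {v : ι → ℝ} {K : ℝ} (hv : ∀ i, |v i| ≤ K) :
    ∑ i, c i * v i ≤ ‖c‖ * (√(Fintype.card ι) * |K|) := by
  have hsq : ∑ i, v i ^ 2 ≤ Fintype.card ι * K ^ 2 := by
    simpa using Finset.sum_le_sum fun i (_ : i ∈ univ) =>
      sq_le_sq' (abs_le.1 (hv i)).1 (abs_le.1 (hv i)).2
  calc ∑ i, c i * v i ≤ √(∑ i, c i ^ 2) * √(∑ i, v i ^ 2) := Real.sum_mul_le_sqrt_mul_sqrt _ _ _
    _ ≤ ‖c‖ * (√(Fintype.card ι) * |K|) := by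
      rw [EuclideanSpace.norm_eq, ← Real.sqrt_sq_eq_abs, ← Real.sqrt_mul (Nat.cast_nonneg _)]
      simp only [Real.norm_eq_abs, sq_abs]
      gcongr

lemma mul_add_mul_le_sqrt_mul_sqrt (a b c d : ℝ) :
    a * b + c * d ≤ √(a ^ 2 + c ^ 2) * √(b ^ 2 + d ^ 2) := by
  simpa [Fin.sum_univ_two] using Real.sum_mul_le_sqrt_mul_sqrt univ ![a, c] ![b, d]

section Lagrangian

variable {E F ι : Type*} [NormedAddCommGroup E] [NormedSpace ℝ E]
  [NormedAddCommGroup F] [InnerProductSpace ℝ F] [Fintype ι]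

def lagrangian (f : E → ℝ) (g : ι → E → ℝ) (A : E →L[ℝ] F) (u : F) (y : EuclideanSpace ℝ ι)
    (w : E) : ℝ :=
  f w + ⟪u, A w⟫ + ∑ l, y l * g l w

lemma StrongConvexOn.lagrangian {μ : ℝ} {f : E → ℝ} {g : ι → E → ℝ}
    (hf : StrongConvexOn Set.univ μ f) (hg : ∀ l, ConvexOn ℝ Set.univ (g l)) (A : E →L[ℝ] F)
    (u : F) {y : EuclideanSpace ℝ ι} (hy : ∀ l, 0 ≤ y l) :
    StrongConvexOn Set.univ μ (lagrangian f g A u y) := by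
  have hlin : ConvexOn ℝ Set.univ fun w => ⟪u, A w⟫ :=
    ((innerSL ℝ u).comp A).toLinearMap.convexOn convex_univ
  have hsum : ConvexOn ℝ Set.univ fun w => ∑ l, y l * g l w :=
    ConvexOn.finset_sum convex_univ _ fun l _ => by simpa using (hg l).smul (hy l)
  convert hf.add_convexOn (hlin.add hsum) using 1
  funext w
  simp only [_root_.lagrangian, Pi.add_apply, add_assoc]

lemma lagrangian_sub_lagrangian (f : E → ℝ) (g : ι → E → ℝ) (A : E →L[ℝ] F) (u u' : F)
    (y y' : EuclideanSpace ℝ ι) (x x' : E) :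
    (lagrangian f g A u y x' - lagrangian f g A u' y' x')
        - (lagrangian f g A u y x - lagrangian f g A u' y' x)
      = ⟪u - u', A (x' - x)⟫ + ∑ l, (y - y') l * (g l x' - g l x) := by
  simp only [lagrangian, map_sub, inner_sub_left, inner_sub_right, PiLp.sub_apply, sub_mul,
    mul_sub, sum_sub_distrib]
  ring

end Lagrangian

/-- If `f` is `μ`-strongly convex, each `g l` is convex with all subgradients
bounded in norm by `Lg`, `x` minimizes `f + ⟪u, A ·⟫ + ∑ l, y l • g l` and `x'` minimizes the
corresponding function with multipliers `(u', y')` (both `y, y' ≥ 0`), then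
`‖x − x'‖ ≤ (√(‖A‖² + q Lg²)/μ) ‖(u − u', y − y')‖`. -/
theorem strongly_convex_lagrangian_minimizer_lipschitz
    (d p q : ℕ) (μ Lg : ℝ) (hμ : 0 < μ)
    (f : EuclideanSpace ℝ (Fin d) → ℝ)
    (hf : ConvexOn ℝ Set.univ (fun x => f x - μ / 2 * ‖x‖ ^ 2))
    (g : Fin q → EuclideanSpace ℝ (Fin d) → ℝ)
    (hg : ∀ l, ConvexOn ℝ Set.univ (g l))
    (hsub : ∀ l (x s : EuclideanSpace ℝ (Fin d)), IsSubgradientAt (g l) s x → ‖s‖ ≤ Lg)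
    (A : EuclideanSpace ℝ (Fin d) →L[ℝ] EuclideanSpace ℝ (Fin p))
    (u u' : EuclideanSpace ℝ (Fin p))
    (y y' : EuclideanSpace ℝ (Fin q))
    (hy : ∀ l, 0 ≤ y l) (hy' : ∀ l, 0 ≤ y' l)
    (x x' : EuclideanSpace ℝ (Fin d))
    (hx : ∀ w, f x + ⟪u, A x⟫ + ∑ l, y l * g l x ≤ f w + ⟪u, A w⟫ + ∑ l, y l * g l w)
    (hx' : ∀ w, f x' + ⟪u', A x'⟫ + ∑ l, y' l * g l x'
      ≤ f w + ⟪u', A w⟫ + ∑ l, y' l * g l w) :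
    ‖x - x'‖ ≤ Real.sqrt (‖A‖ ^ 2 + q * Lg ^ 2) / μ *
      Real.sqrt (‖u - u'‖ ^ 2 + ‖y - y'‖ ^ 2) := by
  have hstrong := strongConvexOn_iff_convex.2 hf
  have hkey := (hstrong.lagrangian hg A u hy).mul_sq_norm_sub_le_of_isMinOn
    (hstrong.lagrangian hg A u' hy') (fun w _ => hx w) (fun w _ => hx' w) trivial trivial
  rw [lagrangian_sub_lagrangian] at hkey
  have hA : ⟪u - u', A (x' - x)⟫ ≤ ‖A‖ * ‖u - u'‖ * ‖x - x'‖ := by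
    calc ⟪u - u', A (x' - x)⟫ ≤ ‖u - u'‖ * (‖A‖ * ‖x' - x‖) :=
          (real_inner_le_norm _ _).trans (by gcongr; exact A.le_opNorm _)
      _ = ‖A‖ * ‖u - u'‖ * ‖x - x'‖ := by rw [norm_sub_rev x']; ring
  have hlip : ∀ l, |g l x' - g l x| ≤ Lg * ‖x - x'‖ := fun l =>
    norm_sub_rev x x' ▸ abs_sub_le_mul_norm_sub_of_isSubgradientAt
      (fun z => (hg l).exists_isSubgradientAt
        (continuousOn_univ.1 ((hg l).continuousOn isOpen_univ)) z) (hsub l) x' x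
  have hG := (y - y').sum_mul_le_of_abs_le hlip
  rw [Fintype.card_fin, abs_mul, abs_norm] at hG
  have hCS := mul_add_mul_le_sqrt_mul_sqrt ‖A‖ ‖u - u'‖ (√q * |Lg|) ‖y - y'‖
  rw [mul_pow, Real.sq_sqrt (Nat.cast_nonneg q), sq_abs] at hCS
  have hquad : μ * ‖x - x'‖ ^ 2 ≤ √(‖A‖ ^ 2 + q * Lg ^ 2) *
      √(‖u - u'‖ ^ 2 + ‖y - y'‖ ^ 2) * ‖x - x'‖ := by
    linarith [mul_le_mul_of_nonneg_right hCS (norm_nonneg (x - x'))]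
  rw [div_mul_eq_mul_div, le_div_iff₀ hμ]
  rcases (norm_nonneg (x - x')).eq_or_lt with hzero | hpos
  · rw [← hzero, zero_mul]
    positivity
  · exact le_of_mul_le_mul_right (by linarith) hpos
end

section
/- Let f : ℝ^d → ℝ be μ-strongly convex, let g = (g_1, …, g_q) : ℝ^d → ℝ^q be componentwise convex, let A ∈ ℝ^{p×d}, b, v, p̂ ∈ ℝ^p, z ∈ ℝ^q, q̂ ∈ ℝ^q, ρ > 0. Suppose x⁺ minimizes over ℝ^d the augmented Lagrangian x ↦ f(x) + ⟨p̂, A x − b − v⟩ + (ρ/2)‖A x − b − v‖² + (1/(2ρ))‖[q̂ + ρ(g(x) − z)]_+‖² − (1/(2ρ))‖q̂‖², and set u⁺ = p̂ + ρ(A x⁺ − b − v) and y⁺ = [q̂ + ρ(g(x⁺) − z)]_+. Then x⁺ minimizes the ordinary Lagrangian x ↦ f(x) + ⟨u⁺, A x − b⟩ + ⟨y⁺, g(x)⟩ over ℝ^d. -/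
/-!
Move from `x⁺` towards `w` by a step `t ∈ (0, 1]`. Convexity of `f` and of each `g_l` bounds the
augmented Lagrangian at `(1 - t) x⁺ + t w`: the quadratic penalty in `A x` expands exactly with
linear coefficient `u⁺`, while `c ↦ ‖[q̂ + ρ (c - z)]₊‖² / (2ρ)` is nondecreasing and lies below its
linearization at `g x⁺` (slope `y⁺`) plus `ρ/2 ‖·‖²`. Minimality of `x⁺` thus gives
`0 ≤ t (ℓ w - ℓ x⁺) + O(t²)` for the ordinary Lagrangian `ℓ`, and `t → 0⁺` concludes.
-/

open RealInnerProductSpace Finset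

/-- Componentwise projection onto the nonnegative orthant of `ℝ^q`. -/
noncomputable def posPart {q : ℕ} (w : EuclideanSpace ℝ (Fin q)) : EuclideanSpace ℝ (Fin q) :=
  WithLp.toLp 2 (fun l => max (w l) 0)

open Filter Topology

lemma nonneg_of_forall_mul_add_mul_sq_nonneg {a C : ℝ}
    (h : ∀ t ∈ Set.Ioc (0 : ℝ) 1, 0 ≤ t * a + t ^ 2 * C) : 0 ≤ a := by
  have hlim : Tendsto (fun t : ℝ => a + t * C) (𝓝[>] 0) (𝓝 a) := by
    refine ((continuous_const.add (continuous_id.mul continuous_const)).tendsto' 0 a ?_).mono_left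
      nhdsWithin_le_nhds
    simp
  refine ge_of_tendsto hlim ?_
  filter_upwards [Ioc_mem_nhdsGT zero_lt_one] with t ht
  have := h t ht
  nlinarith [ht.1]

lemma inner_add_half_mul_norm_sq_add {P : Type*} [NormedAddCommGroup P] [InnerProductSpace ℝ P]
    (ρ : ℝ) (p a d : P) :
    ⟪p, a + d⟫ + ρ / 2 * ‖a + d‖ ^ 2
      = ⟪p, a⟫ + ρ / 2 * ‖a‖ ^ 2 + ⟪p + ρ • a, d⟫ + ρ / 2 * ‖d‖ ^ 2 := by
  rw [norm_add_sq_real, inner_add_right, inner_add_left, real_inner_smul_left]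
  ring

lemma sq_max_zero_le_sq_max_zero_add {a b d : ℝ} (h : b ≤ a + d) :
    max b 0 ^ 2 ≤ (max a 0 + d) ^ 2 := by
  rcases le_or_gt b 0 with hb | hb
  · rw [max_eq_right hb, zero_pow two_ne_zero]; positivity
  · rw [max_eq_left hb.le]
    nlinarith [le_max_left a 0]

lemma norm_posPart_le_norm_posPart_add {q : ℕ} {u u' δ : EuclideanSpace ℝ (Fin q)}
    (h : ∀ l, u' l ≤ u l + δ l) : ‖posPart u'‖ ≤ ‖posPart u + δ‖ := by
  rw [← sq_le_sq₀ (norm_nonneg _) (norm_nonneg _), EuclideanSpace.real_norm_sq_eq,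
    EuclideanSpace.real_norm_sq_eq]
  exact sum_le_sum fun l _ => sq_max_zero_le_sq_max_zero_add (h l)

lemma one_div_two_mul_norm_posPart_sq_le {q : ℕ} {ρ : ℝ} (hρ : 0 < ρ)
    {u u' δ : EuclideanSpace ℝ (Fin q)} (h : ∀ l, u' l ≤ u l + ρ * δ l) :
    1 / (2 * ρ) * ‖posPart u'‖ ^ 2
      ≤ 1 / (2 * ρ) * ‖posPart u‖ ^ 2 + ⟪posPart u, δ⟫ + ρ / 2 * ‖δ‖ ^ 2 := by
  have hle : ‖posPart u'‖ ^ 2 ≤ ‖posPart u + ρ • δ‖ ^ 2 := by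
    gcongr
    exact norm_posPart_le_norm_posPart_add (by simpa using h)
  rw [norm_add_sq_real, norm_smul, real_inner_smul_right, Real.norm_of_nonneg hρ.le] at hle
  have : 1 / (2 * ρ) * (2 * (ρ * ⟪posPart u, δ⟫) + (ρ * ‖δ‖) ^ 2)
      = ⟪posPart u, δ⟫ + ρ / 2 * ‖δ‖ ^ 2 := by
    field_simp
  nlinarith [mul_le_mul_of_nonneg_left hle (by positivity : (0 : ℝ) ≤ 1 / (2 * ρ))]

/-- If `x⁺` minimizes the augmented Lagrangian and
`u⁺ = p̂ + ρ(A x⁺ − b − v)`, `y⁺ = [q̂ + ρ(g(x⁺) − z)]₊`, then `x⁺` minimizes the ordinary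
Lagrangian `x ↦ f x + ⟪u⁺, A x − b⟫ + ⟪y⁺, g x⟫`. -/
theorem augmented_lagrangian_step_minimizes_lagrangian
    (d p q : ℕ) (μ ρ : ℝ) (hμ : 0 < μ) (hρ : 0 < ρ)
    (f : EuclideanSpace ℝ (Fin d) → ℝ)
    (hf : ConvexOn ℝ Set.univ (fun x => f x - μ / 2 * ‖x‖ ^ 2))
    (g : EuclideanSpace ℝ (Fin d) → EuclideanSpace ℝ (Fin q))
    (hg : ∀ l, ConvexOn ℝ Set.univ (fun x => g x l))
    (A : EuclideanSpace ℝ (Fin d) →L[ℝ] EuclideanSpace ℝ (Fin p))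
    (b v phat : EuclideanSpace ℝ (Fin p)) (z qhat : EuclideanSpace ℝ (Fin q))
    (xplus : EuclideanSpace ℝ (Fin d))
    (hxplus : ∀ w : EuclideanSpace ℝ (Fin d),
      f xplus + ⟪phat, A xplus - b - v⟫ + ρ / 2 * ‖A xplus - b - v‖ ^ 2
          + 1 / (2 * ρ) * ‖posPart (qhat + ρ • (g xplus - z))‖ ^ 2
          - 1 / (2 * ρ) * ‖qhat‖ ^ 2
        ≤ f w + ⟪phat, A w - b - v⟫ + ρ / 2 * ‖A w - b - v‖ ^ 2
          + 1 / (2 * ρ) * ‖posPart (qhat + ρ • (g w - z))‖ ^ 2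
          - 1 / (2 * ρ) * ‖qhat‖ ^ 2)
    (uplus : EuclideanSpace ℝ (Fin p)) (yplus : EuclideanSpace ℝ (Fin q))
    (huplus : uplus = phat + ρ • (A xplus - b - v))
    (hyplus : yplus = posPart (qhat + ρ • (g xplus - z))) :
    ∀ w : EuclideanSpace ℝ (Fin d),
      f xplus + ⟪uplus, A xplus - b⟫ + ⟪yplus, g xplus⟫
        ≤ f w + ⟪uplus, A w - b⟫ + ⟪yplus, g w⟫ := by
  subst huplus hyplus
  have hf_convex : ConvexOn ℝ Set.univ f :=
    strongConvexOn_zero.1 ((strongConvexOn_iff_convex.2 hf).mono hμ.le)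
  intro w
  rw [← sub_nonneg]
  refine nonneg_of_forall_mul_add_mul_sq_nonneg
    (C := ρ / 2 * ‖A (w - xplus)‖ ^ 2 + ρ / 2 * ‖g w - g xplus‖ ^ 2) fun t ⟨ht0, ht1⟩ => ?_
  set y := (1 - t) • xplus + t • w
  have hfy : f y ≤ (1 - t) * f xplus + t * f w :=
    hf_convex.2 trivial trivial (by linarith) ht0.le (by ring)
  have hgy (l : Fin q) : g y l ≤ g xplus l + t * (g w l - g xplus l) := by
    have := (hg l).2 (Set.mem_univ xplus) (Set.mem_univ w) (by linarith : 0 ≤ 1 - t) ht0.le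
      (by ring)
    simp only [smul_eq_mul] at this
    linarith
  have hAy : A y - b - v = (A xplus - b - v) + t • A (w - xplus) := by
    simp only [y, map_add, map_smul, map_sub]
    module
  have hpen := inner_add_half_mul_norm_sq_add ρ phat (A xplus - b - v) (t • A (w - xplus))
  have hpos := one_div_two_mul_norm_posPart_sq_le hρ (u := qhat + ρ • (g xplus - z))
    (u' := qhat + ρ • (g y - z)) (δ := t • (g w - g xplus)) fun l => by
      simp only [PiLp.add_apply, PiLp.smul_apply, PiLp.sub_apply, smul_eq_mul]
      nlinarith [hgy l]
  have hmin := hxplus y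
  rw [← hAy] at hpen
  simp only [inner_sub_right, real_inner_smul_right, norm_smul, mul_pow,
    Real.norm_of_nonneg ht0.le, map_sub] at hmin hpen hpos ⊢
  linear_combination hmin + hfy + hpen + hpos
end

section
/- Let φ_i : ℝ^m → ℝ (i = 1,…,N) be differentiable with L-Lipschitz gradients, let ζ* ∈ ℝ^m, let ζ_i^k ∈ ℝ^m (i = 1,…,N, k = 0,…,K) be arbitrary sequences, let W^k (k = 0,…,K−1) be doubly stochastic N×N matrices, and let ρ > 0 satisfy ρL ≤ 1. Define P_i^k = (1/2)‖ζ_i^{k+1} − ζ*‖² − (1/2)‖Σ_{j=1}^N W^k_{ij} ζ_j^k − ζ*‖² + ρ⟨ζ*, ∇φ_i(ζ_i^{k+1}) − ∇φ_i(ζ_i^k)⟩. Then Σ_{i=1}^N ( Σ_{k=0}^{K−1} P_i^k − ρ⟨ζ_i^0, ∇φ_i(ζ_i^K) − ∇φ_i(ζ_i^0)⟩ ) ≥ −((1 + 3ρL)/2) Σ_{i=1}^N ‖ζ_i^0 − ζ*‖². -/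
open RealInnerProductSpace Finset

private lemma ds_contract {N m : ℕ} (W : Matrix (Fin N) (Fin N) ℝ)
    (hpos : ∀ i j, 0 ≤ W i j) (hrow : ∀ i, ∑ j, W i j = 1)
    (hcol : ∀ j, ∑ i, W i j = 1) (x : Fin N → EuclideanSpace ℝ (Fin m)) :
    ∑ i, ‖∑ j, W i j • x j‖ ^ 2 ≤ ∑ i, ‖x i‖ ^ 2 := by
  have key : ∀ i, ‖∑ j, W i j • x j‖ ^ 2 ≤ ∑ j, W i j * ‖x j‖ ^ 2 := by
    intro i
    have h1 : ‖∑ j, W i j • x j‖ ≤ ∑ j, W i j * ‖x j‖ := by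
      refine (norm_sum_le _ _).trans_eq ?_
      refine Finset.sum_congr rfl fun j _ => ?_
      rw [norm_smul, Real.norm_eq_abs, abs_of_nonneg (hpos i j)]
    have h2 : (∑ j, W i j * ‖x j‖) ^ 2 ≤ ∑ j, W i j * ‖x j‖ ^ 2 := by
      have hcs := Finset.sum_mul_sq_le_sq_mul_sq Finset.univ
        (fun j => Real.sqrt (W i j)) (fun j => Real.sqrt (W i j) * ‖x j‖)
      have e1 : ∀ j : Fin N, Real.sqrt (W i j) * (Real.sqrt (W i j) * ‖x j‖)
          = W i j * ‖x j‖ := fun j => by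
        rw [← mul_assoc, Real.mul_self_sqrt (hpos i j)]
      have e2 : ∀ j : Fin N, (Real.sqrt (W i j)) ^ 2 = W i j := fun j =>
        Real.sq_sqrt (hpos i j)
      have e3 : ∀ j : Fin N, (Real.sqrt (W i j) * ‖x j‖) ^ 2 = W i j * ‖x j‖ ^ 2 :=
        fun j => by rw [mul_pow, Real.sq_sqrt (hpos i j)]
      simp only [e1, e2, e3, hrow i, one_mul] at hcs
      exact hcs
    calc ‖∑ j, W i j • x j‖ ^ 2 ≤ (∑ j, W i j * ‖x j‖) ^ 2 := by
          have hnn : (0:ℝ) ≤ ‖∑ j, W i j • x j‖ := norm_nonneg _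
          nlinarith [h1]
      _ ≤ _ := h2
  calc ∑ i, ‖∑ j, W i j • x j‖ ^ 2 ≤ ∑ i, ∑ j, W i j * ‖x j‖ ^ 2 :=
        Finset.sum_le_sum fun i _ => key i
    _ = ∑ j, (∑ i, W i j) * ‖x j‖ ^ 2 := by
        rw [Finset.sum_comm]; simp [Finset.sum_mul]
    _ = ∑ i, ‖x i‖ ^ 2 := by simp [hcol]

/-- Aggregate lower bound for the telescoping terms `P_i^k`: with `L`-Lipschitz
gradients `∇φ_i`, doubly stochastic mixing matrices `W^k` and `0 < ρ`, `ρL ≤ 1`,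
`∑_i (∑_{k<K} P_i^k − ρ⟪ζ_i^0, ∇φ_i(ζ_i^K) − ∇φ_i(ζ_i^0)⟫) ≥ −((1+3ρL)/2) ∑_i ‖ζ_i^0 − ζ*‖²`. -/
theorem aggregate_P_term_lower_bound
    (m N K : ℕ) (L ρ : ℝ) (hρ : 0 < ρ) (hρL : ρ * L ≤ 1)
    (φ : Fin N → EuclideanSpace ℝ (Fin m) → ℝ)
    (G : Fin N → EuclideanSpace ℝ (Fin m) → EuclideanSpace ℝ (Fin m))
    (hG : ∀ i x, HasGradientAt (φ i) (G i x) x)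
    (hLip : ∀ i x x', ‖G i x - G i x'‖ ≤ L * ‖x - x'‖)
    (ζstar : EuclideanSpace ℝ (Fin m))
    (ζ : ℕ → Fin N → EuclideanSpace ℝ (Fin m))
    (W : ℕ → Matrix (Fin N) (Fin N) ℝ)
    (hW : ∀ k < K, (∀ i j, 0 ≤ W k i j) ∧ (∀ i, ∑ j, W k i j = 1) ∧
      (∀ j, ∑ i, W k i j = 1)) :
    ∑ i, ((∑ k ∈ range K,
        (1 / 2 * ‖ζ (k + 1) i - ζstar‖ ^ 2
          - 1 / 2 * ‖(∑ j, W k i j • ζ k j) - ζstar‖ ^ 2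
          + ρ * ⟪ζstar, G i (ζ (k + 1) i) - G i (ζ k i)⟫))
        - ρ * ⟪ζ 0 i, G i (ζ K i) - G i (ζ 0 i)⟫)
      ≥ -((1 + 3 * ρ * L) / 2) * ∑ i, ‖ζ 0 i - ζstar‖ ^ 2 := by
  rcases Nat.eq_zero_or_pos N with hN | hN
  · subst hN; simp
  rcases Nat.eq_zero_or_pos m with hm | hm
  · subst hm
    have h0 : ∀ x : EuclideanSpace ℝ (Fin 0), ‖x‖ = 0 := fun x => by
      simp [EuclideanSpace.norm_eq]
    have hi : ∀ x y : EuclideanSpace ℝ (Fin 0), ⟪x, y⟫ = 0 := fun x y => by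
      simp [PiLp.inner_apply]
    simp [h0, hi]
  -- L is nonnegative
  have i0 : Fin N := ⟨0, hN⟩
  have hL : 0 ≤ L := by
    have h := hLip i0 (EuclideanSpace.single ⟨0, hm⟩ (1:ℝ)) 0
    rw [sub_zero, EuclideanSpace.norm_single, norm_one, mul_one] at h
    exact le_trans (norm_nonneg _) h
  -- abbreviations
  set f : ℕ → ℝ := fun k =>
    1 / 2 * ∑ i, ‖ζ k i - ζstar‖ ^ 2 + ρ * ∑ i, ⟪ζstar, G i (ζ k i)⟫ with hf
  -- step 2 : per-step bound after summing over i
  have step2 : ∀ k ∈ range K,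
      f (k + 1) - f k ≤ ∑ i,
        (1 / 2 * ‖ζ (k + 1) i - ζstar‖ ^ 2
          - 1 / 2 * ‖(∑ j, W k i j • ζ k j) - ζstar‖ ^ 2
          + ρ * ⟪ζstar, G i (ζ (k + 1) i) - G i (ζ k i)⟫) := by
    intro k hk
    rw [Finset.mem_range] at hk
    obtain ⟨hpos, hrow, hcol⟩ := hW k hk
    have hcontr : ∑ i, ‖(∑ j, W k i j • ζ k j) - ζstar‖ ^ 2
        ≤ ∑ i, ‖ζ k i - ζstar‖ ^ 2 := by
      have heq : ∀ i : Fin N, (∑ j, W k i j • ζ k j) - ζstar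
          = ∑ j, W k i j • (ζ k j - ζstar) := by
        intro i
        simp only [smul_sub, Finset.sum_sub_distrib, ← Finset.sum_smul, hrow i, one_smul]
      calc ∑ i, ‖(∑ j, W k i j • ζ k j) - ζstar‖ ^ 2
          = ∑ i, ‖∑ j, W k i j • (ζ k j - ζstar)‖ ^ 2 := by
            exact Finset.sum_congr rfl fun i _ => by rw [heq i]
        _ ≤ _ := ds_contract (W k) hpos hrow hcol _
    have hexp : ∑ i,
        (1 / 2 * ‖ζ (k + 1) i - ζstar‖ ^ 2
          - 1 / 2 * ‖(∑ j, W k i j • ζ k j) - ζstar‖ ^ 2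
          + ρ * ⟪ζstar, G i (ζ (k + 1) i) - G i (ζ k i)⟫)
        = (1 / 2 * ∑ i, ‖ζ (k + 1) i - ζstar‖ ^ 2
          - 1 / 2 * ∑ i, ‖(∑ j, W k i j • ζ k j) - ζstar‖ ^ 2)
          + (ρ * ∑ i, ⟪ζstar, G i (ζ (k + 1) i)⟫ - ρ * ∑ i, ⟪ζstar, G i (ζ k i)⟫) := by
      simp only [inner_sub_right, Finset.sum_add_distrib, Finset.sum_sub_distrib,
        ← Finset.mul_sum]
      ring
    rw [hexp, hf]
    simp only
    nlinarith [hcontr]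
  -- telescoping
  have tele : f K - f 0 ≤ ∑ k ∈ range K, ∑ i,
      (1 / 2 * ‖ζ (k + 1) i - ζstar‖ ^ 2
        - 1 / 2 * ‖(∑ j, W k i j • ζ k j) - ζstar‖ ^ 2
        + ρ * ⟪ζstar, G i (ζ (k + 1) i) - G i (ζ k i)⟫) := by
    calc f K - f 0 = ∑ k ∈ range K, (f (k + 1) - f k) := (Finset.sum_range_sub f K).symm
      _ ≤ _ := Finset.sum_le_sum step2
  -- per-i final bound
  have per : ∀ i : Fin N,
      -((1 + 3 * ρ * L) / 2) * ‖ζ 0 i - ζstar‖ ^ 2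
      ≤ 1 / 2 * ‖ζ K i - ζstar‖ ^ 2 - 1 / 2 * ‖ζ 0 i - ζstar‖ ^ 2
        + ρ * ⟪ζstar - ζ 0 i, G i (ζ K i) - G i (ζ 0 i)⟫ := by
    intro i
    set a := ‖ζ K i - ζstar‖ with ha
    set b := ‖ζ 0 i - ζstar‖ with hb
    have ha0 : 0 ≤ a := norm_nonneg _
    have hb0 : 0 ≤ b := norm_nonneg _
    have hbr : ‖ζstar - ζ 0 i‖ = b := norm_sub_rev _ _
    have h1 : -(b * (L * ‖ζ K i - ζ 0 i‖)) ≤ ⟪ζstar - ζ 0 i, G i (ζ K i) - G i (ζ 0 i)⟫ := by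
      have habs := abs_real_inner_le_norm (ζstar - ζ 0 i) (G i (ζ K i) - G i (ζ 0 i))
      have hlip := hLip i (ζ K i) (ζ 0 i)
      have hneg := neg_abs_le (⟪ζstar - ζ 0 i, G i (ζ K i) - G i (ζ 0 i)⟫)
      rw [hbr] at habs
      nlinarith [norm_nonneg (G i (ζ K i) - G i (ζ 0 i))]
    have h2 : ‖ζ K i - ζ 0 i‖ ≤ a + b := by
      have := norm_sub_le_norm_sub_add_norm_sub (ζ K i) ζstar (ζ 0 i)
      rw [hbr] at this
      exact this
    have h3 : -(b * (L * (a + b))) ≤ -(b * (L * ‖ζ K i - ζ 0 i‖)) := by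
      have : L * ‖ζ K i - ζ 0 i‖ ≤ L * (a + b) := by
        exact mul_le_mul_of_nonneg_left h2 hL
      nlinarith
    have h4 : -(ρ * (b * (L * (a + b)))) ≤ ρ * ⟪ζstar - ζ 0 i, G i (ζ K i) - G i (ζ 0 i)⟫ := by
      have := le_trans h3 h1
      nlinarith [hρ.le]
    have ht0 : 0 ≤ ρ * L := mul_nonneg hρ.le hL
    nlinarith [sq_nonneg (a - ρ * L * b), mul_nonneg (mul_nonneg ht0 (sub_nonneg.2 hρL))
      (sq_nonneg b)]
  -- combine
  have hsplit : ∑ i, ((∑ k ∈ range K,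
        (1 / 2 * ‖ζ (k + 1) i - ζstar‖ ^ 2
          - 1 / 2 * ‖(∑ j, W k i j • ζ k j) - ζstar‖ ^ 2
          + ρ * ⟪ζstar, G i (ζ (k + 1) i) - G i (ζ k i)⟫))
        - ρ * ⟪ζ 0 i, G i (ζ K i) - G i (ζ 0 i)⟫)
      = (∑ k ∈ range K, ∑ i,
        (1 / 2 * ‖ζ (k + 1) i - ζstar‖ ^ 2
          - 1 / 2 * ‖(∑ j, W k i j • ζ k j) - ζstar‖ ^ 2
          + ρ * ⟪ζstar, G i (ζ (k + 1) i) - G i (ζ k i)⟫))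
        - ∑ i, ρ * ⟪ζ 0 i, G i (ζ K i) - G i (ζ 0 i)⟫ := by
    rw [Finset.sum_sub_distrib, Finset.sum_comm]
  have hfexp : f K - f 0 - ∑ i, ρ * ⟪ζ 0 i, G i (ζ K i) - G i (ζ 0 i)⟫
      = ∑ i, (1 / 2 * ‖ζ K i - ζstar‖ ^ 2 - 1 / 2 * ‖ζ 0 i - ζstar‖ ^ 2
        + ρ * ⟪ζstar - ζ 0 i, G i (ζ K i) - G i (ζ 0 i)⟫) := by
    simp only [hf, inner_sub_left, inner_sub_right, Finset.sum_add_distrib,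
      Finset.sum_sub_distrib, ← Finset.mul_sum]
    ring
  rw [ge_iff_le, hsplit, neg_mul, ← Finset.mul_sum, ← neg_mul, Finset.mul_sum]
  calc ∑ i, -((1 + 3 * ρ * L) / 2) * ‖ζ 0 i - ζstar‖ ^ 2
      ≤ ∑ i, (1 / 2 * ‖ζ K i - ζstar‖ ^ 2 - 1 / 2 * ‖ζ 0 i - ζstar‖ ^ 2
        + ρ * ⟪ζstar - ζ 0 i, G i (ζ K i) - G i (ζ 0 i)⟫) :=
        Finset.sum_le_sum fun i _ => per i
    _ = f K - f 0 - ∑ i, ρ * ⟪ζ 0 i, G i (ζ K i) - G i (ζ 0 i)⟫ := hfexp.symm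
    _ ≤ _ := by
        have := tele
        rw [Finset.mul_sum]
        linarith
end

section
/- Consider the convex problem: minimize Σ_{i=1}^N f_i(x_i) over (x_i, v_i, z_i) subject to A_i x_i − b_i = v_i and g_i(x_i) ≤ z_i for each i, Σ_i v_i = 0 and Σ_i z_i = 0, where each f_i : ℝ^{d_i} → ℝ is convex, each g_i : ℝ^{d_i} → ℝ^q is componentwise convex, and Slater's condition holds for the underlying coupled problem (there exists x̃ with Σ_i (A_i x̃_i − b_i) = 0 and Σ_i g_i(x̃_i) < 0). Then a feasible point (x*, v*, z*) is optimal if and only if there exist multipliers u_i* ∈ ℝ^p and y_i* ∈ ℝ^q for each i satisfying: (local conditions) 0 ∈ ∂f_i(x_i*) + A_iᵀ u_i* + Σ_{l=1}^q y_{il}* ∂g_{il}(x_i*), A_i x_i* − b_i − v_i* = 0, ⟨y_i*, g_i(x_i*) − z_i*⟩ = 0, y_i* ≥ 0, together with (global conditions) u_1* = u_2* = ⋯ = u_N*, y_1* = y_2* = ⋯ = y_N*, Σ_i v_i* = 0 and Σ_i z_i* = 0. -/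
/-!
Optimality in the reformulated problem is optimality of `x*` for the coupled problem
`min ∑ fᵢ(xᵢ)` subject to `∑ Aᵢ xᵢ = ∑ bᵢ` and `∑ gᵢ(xᵢ) ≤ 0`. Under Slater's condition, a
hyperplane separating `(f*, 0, ∑ bᵢ)` from the image of the strict epigraph of `(∑ fᵢ, ∑ gᵢ)`
under `(x, r, w) ↦ (r, w, ∑ Aᵢ xᵢ)` yields multipliers `u, y ≥ 0` whose Lagrangian is bounded
below by `f*`. The Lagrangian splits over the blocks, so each `xᵢ*` minimizes
`fᵢ + ∑ₗ yₗ gᵢₗ + ⟪Aᵢᵀ u, ·⟫`, and such a minimizer is described by subgradients: this sum rule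
is the same multiplier theorem applied to `min f a + ∑ₗ yₗ gₗ bₗ + ⟪c, a⟫` subject to `bₗ = a`.
The converse is weak duality.
-/

open RealInnerProductSpace Finset

open Set

lemma le_of_forall_pos_lt_add_mul {a b k : ℝ} (h : ∀ ε : ℝ, 0 < ε → a < b + ε * k) : a ≤ b := by
  rcases le_or_gt k 0 with hk | hk
  · linarith [h 1 one_pos]
  · by_contra! hba
    have := h ((a - b) / k) (div_pos (sub_pos.2 hba) hk)
    rw [div_mul_cancel₀ _ hk.ne'] at this
    linarith

lemma nonpos_of_forall_pos_add_mul_neg {c k : ℝ} (h : ∀ t : ℝ, 0 < t → c + t * k < 0) : k ≤ 0 := by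
  by_contra! hk
  have := h ((|c| + 1) / k) (by positivity)
  rw [div_mul_cancel₀ _ hk.ne'] at this
  linarith [neg_abs_le c]

lemma ContinuousLinearMap.apply_prod_pi {ι V : Type*} [Fintype ι] [DecidableEq ι]
    [NormedAddCommGroup V] [NormedSpace ℝ V] (φ : ℝ × (ι → ℝ) × V →L[ℝ] ℝ) (r : ℝ)
    (w : ι → ℝ) (v : V) :
    φ (r, w, v) = r * φ (1, 0, 0) + ∑ l, w l * φ (0, Pi.single l 1, 0) + φ (0, 0, v) := by
  have : (r, w, v) = r • ((1 : ℝ), (0 : ι → ℝ), (0 : V))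
      + ∑ l, w l • ((0 : ℝ), (Pi.single l 1 : ι → ℝ), (0 : V)) + (0, 0, v) := by
    refine Prod.ext (by simp [Prod.fst_sum]) (Prod.ext ?_ (by simp [Prod.snd_sum]))
    ext l; simp [Prod.fst_sum, Prod.snd_sum, Finset.sum_apply, Pi.single_apply]
  rw [this, map_add, map_add, map_smul, map_sum]
  simp only [map_smul, smul_eq_mul]

section Lagrange

variable {X : Type*} [NormedAddCommGroup X] [NormedSpace ℝ X]

def jointStrictEpigraph {ι : Type*} (F : X → ℝ) (G : ι → X → ℝ) : Set (X × ℝ × (ι → ℝ)) :=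
  {p | F p.1 < p.2.1 ∧ ∀ l, G l p.1 < p.2.2 l}

lemma convex_jointStrictEpigraph {ι : Type*} {F : X → ℝ} {G : ι → X → ℝ}
    (hF : ConvexOn ℝ univ F) (hG : ∀ l, ConvexOn ℝ univ (G l)) :
    Convex ℝ (jointStrictEpigraph F G) := by
  rintro ⟨x₁, r₁, w₁⟩ ⟨hr₁, hw₁⟩ ⟨x₂, r₂, w₂⟩ ⟨hr₂, hw₂⟩ a b ha hb hab
  refine ⟨?_, fun l => ?_⟩
  · simpa using (hF.convex_strict_epigraph (x := (x₁, r₁)) (y := (x₂, r₂))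
      ⟨trivial, hr₁⟩ ⟨trivial, hr₂⟩ ha hb hab).2
  · simpa using ((hG l).convex_strict_epigraph (x := (x₁, w₁ l)) (y := (x₂, w₂ l))
      ⟨trivial, hw₁ l⟩ ⟨trivial, hw₂ l⟩ ha hb hab).2

variable [FiniteDimensional ℝ X]

lemma ConvexOn.continuous {F : X → ℝ} (hF : ConvexOn ℝ univ F) : Continuous F :=
  continuousOn_univ.1 (hF.continuousOn isOpen_univ)

lemma isOpen_jointStrictEpigraph {ι : Type*} [Finite ι] {F : X → ℝ} {G : ι → X → ℝ}
    (hF : ConvexOn ℝ univ F) (hG : ∀ l, ConvexOn ℝ univ (G l)) :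
    IsOpen (jointStrictEpigraph F G) := by
  simp only [jointStrictEpigraph, ofPred_and, ofPred_forall]
  refine (isOpen_lt (hF.continuous.comp continuous_fst) (continuous_fst.comp continuous_snd)).inter
    (isOpen_iInter_of_finite fun l => isOpen_lt ((hG l).continuous.comp continuous_fst) ?_)
  exact (continuous_apply l).comp (continuous_snd.comp continuous_snd)

variable {H : Type*} [NormedAddCommGroup H] [InnerProductSpace ℝ H] {ι : Type*} [Fintype ι]

theorem exists_strict_separation {F : X → ℝ} {G : ι → X → ℝ} (hF : ConvexOn ℝ univ F)
    (hG : ∀ l, ConvexOn ℝ univ (G l)) (L : X →ₗ[ℝ] H) {β : H} (hβ : β ∈ LinearMap.range L)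
    {m : ℝ} (hm : ∀ x, L x = β → (∀ l, G l x ≤ 0) → m ≤ F x) :
    ∃ (μ : ℝ) (η : ι → ℝ) (u : H), ∀ x (r : ℝ) (w : ι → ℝ), F x < r → (∀ l, G l x < w l) →
      (r - m) * μ + ∑ l, w l * η l + ⟪u, L x - β⟫ < 0 := by
  classical
  -- inside the range of `L` the image of the strict epigraph is open
  set V := LinearMap.range L
  let T : X × ℝ × (ι → ℝ) →ₗ[ℝ] ℝ × (ι → ℝ) × V :=
    (LinearMap.fst ℝ ℝ _ ∘ₗ LinearMap.snd ℝ X _).prod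
      ((LinearMap.snd ℝ ℝ _ ∘ₗ LinearMap.snd ℝ X _).prod (L.rangeRestrict ∘ₗ LinearMap.fst ℝ X _))
  have hT : ∀ x r w, T (x, r, w) = (r, w, L.rangeRestrict x) := fun _ _ _ => rfl
  have hTsurj : Function.Surjective T := by
    rintro ⟨r, w, v⟩
    obtain ⟨x, rfl⟩ := L.surjective_rangeRestrict v
    exact ⟨(x, r, w), rfl⟩
  set S := T '' jointStrictEpigraph F G
  have hS : IsOpen S :=
    LinearMap.isOpenMap_of_finiteDimensional T hTsurj _ (isOpen_jointStrictEpigraph hF hG)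
  have hm' : ((m, 0, ⟨β, hβ⟩) : ℝ × (ι → ℝ) × V) ∉ S := by
    rintro ⟨⟨x, r, w⟩, ⟨hr, hw⟩, hTx⟩
    simp only [hT, Prod.mk.injEq, Subtype.ext_iff, LinearMap.rangeRestrict,
      LinearMap.codRestrict_apply] at hTx
    obtain ⟨rfl, rfl, hx⟩ := hTx
    exact (hm x hx fun l => (hw l).le).not_gt hr
  obtain ⟨φ, hφ⟩ := geometric_hahn_banach_open_point
    ((convex_jointStrictEpigraph hF hG).linear_image T) hS hm'
  set u := (InnerProductSpace.toDual ℝ V).symm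
    (φ ∘L ContinuousLinearMap.inr ℝ ℝ _ ∘L ContinuousLinearMap.inr ℝ _ V)
  have hu : ∀ v : V, φ (0, 0, v) = ⟪(u : H), v⟫ := fun v => by
    rw [← Submodule.coe_inner, InnerProductSpace.toDual_symm_apply]; rfl
  refine ⟨φ (1, 0, 0), fun l => φ (0, Pi.single l 1, 0), u, fun x r w hr hw => ?_⟩
  have := hφ _ ⟨(x, r, w), ⟨hr, hw⟩, rfl⟩
  rw [hT, φ.apply_prod_pi, φ.apply_prod_pi m, hu, hu] at this
  simp only [Pi.zero_apply, zero_mul, sum_const_zero, add_zero, LinearMap.rangeRestrict,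
    LinearMap.codRestrict_apply] at this
  rw [inner_sub_right]
  linarith

theorem exists_lagrange_multipliers {F : X → ℝ} {G : ι → X → ℝ} (hF : ConvexOn ℝ univ F)
    (hG : ∀ l, ConvexOn ℝ univ (G l)) (L : X →ₗ[ℝ] H) {β : H}
    (hslater : ∃ x, L x = β ∧ ∀ l, G l x < 0) {m : ℝ}
    (hm : ∀ x, L x = β → (∀ l, G l x ≤ 0) → m ≤ F x) :
    ∃ (y : ι → ℝ) (u : H), (∀ l, 0 ≤ y l) ∧ ∀ x, m ≤ F x + ∑ l, y l * G l x + ⟪u, L x - β⟫ := by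
  classical
  obtain ⟨x₀, hx₀, hGx₀⟩ := hslater
  obtain ⟨μ, η, u, hsep⟩ := exists_strict_separation hF hG L ⟨x₀, hx₀⟩ hm
  set r := max (F x₀) m + 1
  have hr : F x₀ < r := by grind
  have hrm : 0 < r - m := by grind
  -- Slater's point rules out a vertical separating hyperplane
  have hμ : μ < 0 := by
    have := hsep x₀ r 0 hr hGx₀
    simp only [Pi.zero_apply, zero_mul, sum_const_zero, add_zero, hx₀, sub_self,
      inner_zero_right] at this
    exact neg_of_mul_neg_right this hrm.le
  have hη : ∀ l, η l ≤ 0 := fun l => nonpos_of_forall_pos_add_mul_neg fun t ht => by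
    have := hsep x₀ r (Pi.single l t) hr fun l' => (hGx₀ l').trans_le (by
      rcases eq_or_ne l' l with rfl | h
      · simpa using ht.le
      · simp [h])
    simpa [Pi.single_apply, hx₀] using this
  refine ⟨fun l => η l / μ, μ⁻¹ • u, fun l => div_nonneg_of_nonpos (hη l) hμ.le, fun x => ?_⟩
  refine le_of_forall_pos_lt_add_mul (k := 1 + ∑ l, η l / μ) fun ε hε => ?_
  have := hsep x (F x + ε) (fun l => G l x + ε) (by linarith) fun l => by linarith
  have key : (F x + ε - m) * μ + ∑ l, (G l x + ε) * η l + ⟪u, L x - β⟫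
      = μ * (F x + ∑ l, η l / μ * G l x + ⟪μ⁻¹ • u, L x - β⟫ + ε * (1 + ∑ l, η l / μ) - m) := by
    have hμ' : μ ≠ 0 := hμ.ne
    simp only [real_inner_smul_left, mul_add, mul_sub, Finset.mul_sum]
    field_simp
    simp only [add_mul, Finset.sum_add_distrib, ← Finset.mul_sum, mul_comm (η _) (G _ x)]
    ring
  rw [key] at this
  linarith [pos_of_mul_neg_right this hμ.le]

end Lagrange

lemma convexOn_sum_apply {κ : Type*} [Fintype κ] {E : κ → Type*} [∀ i, AddCommGroup (E i)]
    [∀ i, Module ℝ (E i)] {φ : ∀ i, E i → ℝ} (hφ : ∀ i, ConvexOn ℝ univ (φ i)) :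
    ConvexOn ℝ univ (fun x : ∀ i, E i => ∑ i, φ i (x i)) := by
  refine ⟨convex_univ, fun x _ x' _ a b ha hb hab => ?_⟩
  simp only [smul_eq_mul, Finset.mul_sum, ← Finset.sum_add_distrib]
  exact Finset.sum_le_sum fun i _ => (hφ i).2 trivial trivial ha hb hab

lemma apply_le_apply_of_forall_sum_le {κ : Type*} [Fintype κ] [DecidableEq κ] {E : κ → Type*}
    {φ : ∀ i, E i → ℝ} {x : ∀ i, E i} (h : ∀ x' : ∀ i, E i, ∑ i, φ i (x i) ≤ ∑ i, φ i (x' i))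
    (i : κ) (t : E i) : φ i (x i) ≤ φ i t := by
  have hsum : ∑ j, (φ j (Function.update x i t j) - φ j (x j)) = φ i t - φ i (x i) := by
    rw [Finset.sum_eq_single i (fun j _ hj => by simp [Function.update_of_ne hj]) (by simp)]
    simp
  linarith [h (Function.update x i t), Finset.sum_sub_distrib (s := univ)
    (fun j => φ j (Function.update x i t j)) (fun j => φ j (x j))]

section Subgradient

variable {E : Type*} [NormedAddCommGroup E] [InnerProductSpace ℝ E]

lemma eq_zero_of_forall_inner_sub_nonpos {s x₀ : E} (h : ∀ t, ⟪s, t - x₀⟫ ≤ 0) : s = 0 :=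
  real_inner_self_nonpos.1 (by simpa using h (x₀ + s))

variable [FiniteDimensional ℝ E]

theorem ConvexOn.exists_isSubgradientAt_s15 {f : E → ℝ} (hf : ConvexOn ℝ univ f) (x₀ : E) :
    ∃ s, IsSubgradientAt f s x₀ := by
  obtain ⟨_, u, -, hu⟩ := exists_lagrange_multipliers (G := Empty.elim) hf Empty.rec
    LinearMap.id ⟨x₀, rfl, Empty.rec⟩ (m := f x₀) fun x hx _ => (congrArg f hx).ge
  refine ⟨-u, fun x => ?_⟩
  have := hu x
  simp only [LinearMap.id_apply, Finset.univ_eq_empty, Finset.sum_empty, add_zero] at this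
  rw [inner_neg_left]
  linarith

theorem IsSubgradientAt.exists_smul_eq_of_const_mul {g : E → ℝ} (hg : ConvexOn ℝ univ g)
    {y : ℝ} (hy : 0 ≤ y) {s x₀ : E} (hs : IsSubgradientAt (fun t => y * g t) s x₀) :
    ∃ s', IsSubgradientAt g s' x₀ ∧ y • s' = s := by
  rcases hy.eq_or_lt with rfl | hy
  · obtain ⟨s', hs'⟩ := hg.exists_isSubgradientAt_s15 x₀
    refine ⟨s', hs', ?_⟩
    rw [zero_smul, eq_zero_of_forall_inner_sub_nonpos (s := s) fun t => by simpa using hs t]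
  · refine ⟨y⁻¹ • s, fun t => ?_, smul_inv_smul₀ hy.ne' s⟩
    have := (inv_mul_le_iff₀ hy).2 (show ⟪s, t - x₀⟫ ≤ y * (g t - g x₀) by linarith [hs t])
    rw [real_inner_smul_left]
    linarith

theorem exists_splitting_multipliers {κ : Type*} [Fintype κ] {f : E → ℝ} {g : κ → E → ℝ}
    (hf : ConvexOn ℝ univ f) (hg : ∀ l, ConvexOn ℝ univ (g l)) {y : κ → ℝ}
    (hy : ∀ l, 0 ≤ y l) {c x₀ : E}
    (hmin : ∀ t, f x₀ + ∑ l, y l * g l x₀ + ⟪c, x₀⟫ ≤ f t + ∑ l, y l * g l t + ⟪c, t⟫) :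
    ∃ u : κ → E, ∀ a (b : κ → E), f x₀ + ⟪c, x₀⟫ + ∑ l, y l * g l x₀
      ≤ f a + ⟪c, a⟫ + ∑ l, y l * g l (b l) + ∑ l, ⟪u l, b l - a⟫ := by
  let L : E × (κ → E) →ₗ[ℝ] PiLp 2 (fun _ : κ => E) :=
    (WithLp.linearEquiv 2 ℝ (κ → E)).symm.toLinearMap ∘ₗ
      (LinearMap.snd ℝ E (κ → E) - LinearMap.pi fun _ => LinearMap.fst ℝ E (κ → E))
  have hL : ∀ a b l, L (a, b) l = b l - a := fun _ _ _ => rfl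
  let F : E × (κ → E) → ℝ := fun p => f p.1 + ⟪c, p.1⟫ + ∑ l, y l * g l (p.2 l)
  have hF : ConvexOn ℝ univ F :=
    ((hf.add ((innerₛₗ ℝ c).convexOn convex_univ)).comp_linearMap (LinearMap.fst ℝ E _)).add
      ((convexOn_sum_apply fun l => (hg l).smul (hy l)).comp_linearMap (LinearMap.snd ℝ E _))
  obtain ⟨_, u, -, hu⟩ := exists_lagrange_multipliers (G := Empty.elim) hF Empty.rec L
    (β := 0) ⟨(x₀, fun _ => x₀), by ext; simp [hL], Empty.rec⟩ (m := F (x₀, fun _ => x₀))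
    fun ⟨a, b⟩ hp _ => by
      have hb : b = fun _ => a := funext fun l => sub_eq_zero.1 (by rw [← hL, hp]; rfl)
      subst hb
      linarith [hmin a]
  refine ⟨fun l => u l, fun a b => ?_⟩
  simpa [PiLp.inner_apply, hL, F] using hu (a, b)

theorem forall_le_iff_exists_subgradients {κ : Type*} [Fintype κ] {f : E → ℝ} {g : κ → E → ℝ}
    (hf : ConvexOn ℝ univ f) (hg : ∀ l, ConvexOn ℝ univ (g l)) {y : κ → ℝ}
    (hy : ∀ l, 0 ≤ y l) (c x₀ : E) :
    (∀ t, f x₀ + ∑ l, y l * g l x₀ + ⟪c, x₀⟫ ≤ f t + ∑ l, y l * g l t + ⟪c, t⟫) ↔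
      ∃ (sf : E) (sg : κ → E), IsSubgradientAt f sf x₀ ∧
        (∀ l, IsSubgradientAt (g l) (sg l) x₀) ∧ sf + c + ∑ l, y l • sg l = 0 := by
  classical
  constructor
  · intro hmin
    obtain ⟨u, hu⟩ := exists_splitting_multipliers hf hg hy hmin
    have hfs : IsSubgradientAt f (∑ l, u l - c) x₀ := fun a => by
      have := hu a fun _ => x₀
      rw [inner_sub_left, inner_sub_right c, sum_inner]
      simp only [← neg_sub a x₀, inner_neg_right, Finset.sum_neg_distrib] at this
      linarith
    have hblock : ∀ b : κ → E, ∑ l, (y l * g l x₀ + ⟪u l, x₀ - x₀⟫)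
        ≤ ∑ l, (y l * g l (b l) + ⟪u l, b l - x₀⟫) := fun b => by
      simp only [sub_self, inner_zero_right, add_zero, Finset.sum_add_distrib]
      linarith [hu x₀ b]
    have hgs : ∀ l, IsSubgradientAt (fun t => y l * g l t) (-u l) x₀ := fun l t => by
      have := apply_le_apply_of_forall_sum_le (φ := fun l s => y l * g l s + ⟪u l, s - x₀⟫)
        (x := fun _ => x₀) hblock l t
      rw [inner_neg_left]
      simp only [sub_self, inner_zero_right, add_zero] at this
      linarith
    choose sg hsg hsg_eq using fun l => (hgs l).exists_smul_eq_of_const_mul (hg l) (hy l)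
    refine ⟨_, sg, hfs, hsg, ?_⟩
    simp [hsg_eq]
  · rintro ⟨sf, sg, hsf, hsg, hsum⟩ t
    have hg' : ∑ l, y l * g l x₀ + ⟪∑ l, y l • sg l, t - x₀⟫ ≤ ∑ l, y l * g l t := by
      rw [sum_inner, ← Finset.sum_add_distrib]
      gcongr with l
      rw [real_inner_smul_left, ← mul_add]
      exact mul_le_mul_of_nonneg_left (hsg l t) (hy l)
    have hzero : ⟪sf, t - x₀⟫ + (⟪c, t⟫ - ⟪c, x₀⟫) + ⟪∑ l, y l • sg l, t - x₀⟫ = 0 := by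
      rw [← inner_sub_right, ← inner_add_left, ← inner_add_left, hsum, inner_zero_left]
    linarith [hsf t]

end Subgradient

lemma sum_eq_sum_of_forall_sub_eq {κ M : Type*} [Fintype κ] [AddCommGroup M] {a b v : κ → M}
    (h : ∀ i, a i - b i = v i) (hv : ∑ i, v i = 0) : ∑ i, a i = ∑ i, b i := by
  rw [← sub_eq_zero, ← Finset.sum_sub_distrib, ← hv]
  exact Finset.sum_congr rfl fun i _ => h i

lemma sum_apply_nonpos_of_forall_le {κ ι : Type*} [Fintype κ] {w z : κ → EuclideanSpace ℝ ι}
    (h : ∀ i l, w i l ≤ z i l) (hz : ∑ i, z i = 0) (l : ι) : ∑ i, w i l ≤ 0 :=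
  calc ∑ i, w i l ≤ ∑ i, z i l := Finset.sum_le_sum fun i _ => h i l
    _ = 0 := by simpa [WithLp.ofLp_sum] using congrArg (fun v : EuclideanSpace ℝ ι => v l) hz

lemma EuclideanSpace.real_inner_eq_sum_mul {ι : Type*} [Fintype ι] (y w : EuclideanSpace ℝ ι) :
    ⟪y, w⟫ = ∑ l, y l * w l := by
  simp [PiLp.inner_apply, mul_comm]

section KKT

variable {N p q : ℕ} {d : Fin N → ℕ} {f : ∀ i, EuclideanSpace ℝ (Fin (d i)) → ℝ}
  {g : ∀ i, EuclideanSpace ℝ (Fin (d i)) → EuclideanSpace ℝ (Fin q)}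
  {A : ∀ i, EuclideanSpace ℝ (Fin (d i)) →L[ℝ] EuclideanSpace ℝ (Fin p)}
  {b : Fin N → EuclideanSpace ℝ (Fin p)} {xstar : ∀ i, EuclideanSpace ℝ (Fin (d i))}

def ReformulatedFeasible
    (A : ∀ i, EuclideanSpace ℝ (Fin (d i)) →L[ℝ] EuclideanSpace ℝ (Fin p))
    (b : Fin N → EuclideanSpace ℝ (Fin p))
    (g : ∀ i, EuclideanSpace ℝ (Fin (d i)) → EuclideanSpace ℝ (Fin q))
    (x : ∀ i, EuclideanSpace ℝ (Fin (d i))) (v : Fin N → EuclideanSpace ℝ (Fin p))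
    (z : Fin N → EuclideanSpace ℝ (Fin q)) : Prop :=
  (∀ i, A i (x i) - b i = v i) ∧ (∀ i l, g i (x i) l ≤ z i l) ∧ (∑ i, v i) = 0 ∧ (∑ i, z i) = 0

def couplingMap (A : ∀ i, EuclideanSpace ℝ (Fin (d i)) →L[ℝ] EuclideanSpace ℝ (Fin p)) :
    (∀ i, EuclideanSpace ℝ (Fin (d i))) →ₗ[ℝ] EuclideanSpace ℝ (Fin p) :=
  ∑ i, (A i : EuclideanSpace ℝ (Fin (d i)) →ₗ[ℝ] EuclideanSpace ℝ (Fin p)) ∘ₗ LinearMap.proj i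

@[simp]
lemma couplingMap_apply (x : ∀ i, EuclideanSpace ℝ (Fin (d i))) :
    couplingMap A x = ∑ i, A i (x i) := by
  simp [couplingMap]

lemma sum_le_of_reformulated_optimal
    (hopt : ∀ x v z, ReformulatedFeasible A b g x v z → ∑ i, f i (xstar i) ≤ ∑ i, f i (x i))
    (x : ∀ i, EuclideanSpace ℝ (Fin (d i))) (hAx : ∑ i, A i (x i) = ∑ i, b i)
    (hgx : ∀ l, ∑ i, g i (x i) l ≤ 0) : ∑ i, f i (xstar i) ≤ ∑ i, f i (x i) := by
  rcases Nat.eq_zero_or_pos N with rfl | hN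
  · simp
  -- spread the total slack `∑ i, g i (x i) ≤ 0` evenly over the blocks
  refine hopt x _ (fun i => g i (x i) - (N : ℝ)⁻¹ • ∑ j, g j (x j))
    ⟨fun _ => rfl, fun i l => ?_, ?_, ?_⟩
  · have : (∑ j, g j (x j)) l = ∑ j, g j (x j) l := by simp [WithLp.ofLp_sum]
    simp only [PiLp.sub_apply, PiLp.smul_apply, smul_eq_mul, this]
    nlinarith [hgx l, inv_pos.2 (Nat.cast_pos.2 hN : (0 : ℝ) < N)]
  · rw [Finset.sum_sub_distrib, hAx, sub_self]
  · rw [Finset.sum_sub_distrib, Finset.sum_const, Finset.card_univ, Fintype.card_fin,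
      ← Nat.cast_smul_eq_nsmul ℝ, smul_smul, mul_inv_cancel₀ (by positivity), one_smul, sub_self]

lemma sum_lagrangian_blocks (u : EuclideanSpace ℝ (Fin p)) (y : Fin q → ℝ)
    (x : ∀ i, EuclideanSpace ℝ (Fin (d i))) :
    ∑ i, (f i (x i) + ∑ l, y l * g i (x i) l + ⟪ContinuousLinearMap.adjoint (A i) u, x i⟫)
      = ∑ i, f i (x i) + ∑ l, y l * ∑ i, g i (x i) l + ⟪u, ∑ i, A i (x i)⟫ := by
  simp only [Finset.sum_add_distrib, ContinuousLinearMap.adjoint_inner_left, inner_sum,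
    Finset.mul_sum]
  rw [Finset.sum_comm (γ := Fin q)]

theorem exists_lagrangian_blocks_of_optimal (hf : ∀ i, ConvexOn ℝ univ (f i))
    (hg : ∀ i l, ConvexOn ℝ univ (fun x => g i x l))
    (hslater : ∃ xt : ∀ i, EuclideanSpace ℝ (Fin (d i)),
      (∑ i, (A i (xt i) - b i)) = 0 ∧ ∀ l, (∑ i, g i (xt i)) l < 0)
    {vstar : Fin N → EuclideanSpace ℝ (Fin p)} {zstar : Fin N → EuclideanSpace ℝ (Fin q)}
    (hstar : ReformulatedFeasible A b g xstar vstar zstar)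
    (hopt : ∀ x v z, ReformulatedFeasible A b g x v z → ∑ i, f i (xstar i) ≤ ∑ i, f i (x i)) :
    ∃ (y : EuclideanSpace ℝ (Fin q)) (u : EuclideanSpace ℝ (Fin p)), (∀ l, 0 ≤ y l) ∧
      (∀ i, ⟪y, g i (xstar i) - zstar i⟫ = 0) ∧
      ∀ i t, f i (xstar i) + ∑ l, y l * g i (xstar i) l
          + ⟪ContinuousLinearMap.adjoint (A i) u, xstar i⟫
        ≤ f i t + ∑ l, y l * g i t l + ⟪ContinuousLinearMap.adjoint (A i) u, t⟫ := by
  classical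
  obtain ⟨hfeq, hfineq, hvsum, hzsum⟩ := hstar
  obtain ⟨xt, hAxt, hgxt⟩ := hslater
  obtain ⟨y, u, hy, hLag⟩ := exists_lagrange_multipliers (convexOn_sum_apply hf)
    (fun l => convexOn_sum_apply fun i => hg i l) (couplingMap A) (β := ∑ i, b i)
    ⟨xt, by simpa [sub_eq_zero] using hAxt, fun l => by simpa [WithLp.ofLp_sum] using hgxt l⟩
    (m := ∑ i, f i (xstar i)) fun x hx hgx =>
      sum_le_of_reformulated_optimal hopt x (by simpa using hx) hgx
  have hAxstar := sum_eq_sum_of_forall_sub_eq hfeq hvsum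
  have hgxstar := sum_apply_nonpos_of_forall_le hfineq hzsum
  have hslack : ∑ l, y l * ∑ i, g i (xstar i) l = 0 := by
    have := hLag xstar
    simp only [couplingMap_apply, hAxstar, sub_self, inner_zero_right, add_zero] at this
    refine le_antisymm (Finset.sum_nonpos fun l _ => ?_) (by linarith)
    exact mul_nonpos_of_nonneg_of_nonpos (hy l) (hgxstar l)
  refine ⟨WithLp.toLp 2 y, u, hy, fun i => ?_, fun i t => ?_⟩
  · have hterm : ∀ i, ⟪WithLp.toLp 2 y, g i (xstar i) - zstar i⟫ ≤ 0 := fun i => by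
      rw [EuclideanSpace.real_inner_eq_sum_mul]
      exact Finset.sum_nonpos fun l _ =>
        mul_nonpos_of_nonneg_of_nonpos (hy l) (sub_nonpos.2 (hfineq i l))
    have htotal : ∑ i, ⟪WithLp.toLp 2 y, g i (xstar i) - zstar i⟫ = 0 := by
      rw [← inner_sum, Finset.sum_sub_distrib, hzsum, sub_zero,
        EuclideanSpace.real_inner_eq_sum_mul, ← hslack]
      simp [WithLp.ofLp_sum]
    exact (Finset.sum_eq_zero_iff_of_nonpos fun i _ => hterm i).1 htotal i (mem_univ i)
  · refine apply_le_apply_of_forall_sum_le (φ := fun i t => f i t + ∑ l, y l * g i t l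
      + ⟪ContinuousLinearMap.adjoint (A i) u, t⟫) (fun x => ?_) i t
    rw [sum_lagrangian_blocks, sum_lagrangian_blocks, hslack, hAxstar]
    have := hLag x
    simp only [couplingMap_apply, inner_sub_right] at this
    linarith

theorem optimal_of_lagrangian_blocks {y : EuclideanSpace ℝ (Fin q)} {u : EuclideanSpace ℝ (Fin p)}
    (hy : ∀ l, 0 ≤ y l) {vstar : Fin N → EuclideanSpace ℝ (Fin p)}
    {zstar : Fin N → EuclideanSpace ℝ (Fin q)}
    (hstar : ReformulatedFeasible A b g xstar vstar zstar)
    (hcomp : ∀ i, ⟪y, g i (xstar i) - zstar i⟫ = 0)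
    (hmin : ∀ i t, f i (xstar i) + ∑ l, y l * g i (xstar i) l
          + ⟪ContinuousLinearMap.adjoint (A i) u, xstar i⟫
        ≤ f i t + ∑ l, y l * g i t l + ⟪ContinuousLinearMap.adjoint (A i) u, t⟫)
    {x : ∀ i, EuclideanSpace ℝ (Fin (d i))} {v : Fin N → EuclideanSpace ℝ (Fin p)}
    {z : Fin N → EuclideanSpace ℝ (Fin q)} (hfeas : ReformulatedFeasible A b g x v z) :
    ∑ i, f i (xstar i) ≤ ∑ i, f i (x i) := by
  obtain ⟨hfeq, -, hvsum, hzsum⟩ := hstar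
  obtain ⟨hAx, hgx, hv, hz⟩ := hfeas
  have hsum := Finset.sum_le_sum fun i (_ : i ∈ Finset.univ) => hmin i (x i)
  rw [sum_lagrangian_blocks, sum_lagrangian_blocks, sum_eq_sum_of_forall_sub_eq hfeq hvsum,
    sum_eq_sum_of_forall_sub_eq hAx hv] at hsum
  have hslack : ∑ l, y l * ∑ i, g i (x i) l ≤ 0 := Finset.sum_nonpos fun l _ =>
    mul_nonpos_of_nonneg_of_nonpos (hy l) (sum_apply_nonpos_of_forall_le hgx hz l)
  have hgz : ∀ i, ⟪y, g i (xstar i)⟫ = ⟪y, zstar i⟫ := fun i => by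
    rw [← sub_eq_zero, ← inner_sub_right, hcomp i]
  have hslack_star : ∑ l, y l * ∑ i, g i (xstar i) l = 0 :=
    calc ∑ l, y l * ∑ i, g i (xstar i) l = ⟪y, ∑ i, g i (xstar i)⟫ := by
          rw [EuclideanSpace.real_inner_eq_sum_mul]; simp [WithLp.ofLp_sum]
      _ = 0 := by rw [inner_sum, Finset.sum_congr rfl fun i _ => hgz i, ← inner_sum, hzsum,
          inner_zero_right]
  linarith

end KKT

/-- KKT characterization of optimality for the reformulated problem:
under Slater's condition, a feasible point `(x*, v*, z*)` is optimal iff there exist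
multipliers `u_i*, y_i*` satisfying the local stationarity/complementarity conditions and the
global consensus and zero-sum conditions. -/
theorem kkt_characterization
    (N p q : ℕ) (d : Fin N → ℕ)
    (f : ∀ i, EuclideanSpace ℝ (Fin (d i)) → ℝ)
    (hf : ∀ i, ConvexOn ℝ Set.univ (f i))
    (g : ∀ i, EuclideanSpace ℝ (Fin (d i)) → EuclideanSpace ℝ (Fin q))
    (hg : ∀ i l, ConvexOn ℝ Set.univ (fun x => g i x l))
    (A : ∀ i, EuclideanSpace ℝ (Fin (d i)) →L[ℝ] EuclideanSpace ℝ (Fin p))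
    (b : Fin N → EuclideanSpace ℝ (Fin p))
    -- Slater's condition for the underlying coupled problem
    (hslater : ∃ xt : ∀ i, EuclideanSpace ℝ (Fin (d i)),
      (∑ i, (A i (xt i) - b i)) = 0 ∧ ∀ l, (∑ i, g i (xt i)) l < 0)
    -- a feasible point of the reformulated problem
    (xstar : ∀ i, EuclideanSpace ℝ (Fin (d i)))
    (vstar : Fin N → EuclideanSpace ℝ (Fin p))
    (zstar : Fin N → EuclideanSpace ℝ (Fin q))
    (hfeq : ∀ i, A i (xstar i) - b i = vstar i)
    (hfineq : ∀ i l, g i (xstar i) l ≤ zstar i l)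
    (hvsum : (∑ i, vstar i) = 0) (hzsum : (∑ i, zstar i) = 0) :
    -- optimality for the reformulated problem
    (∀ (x : ∀ i, EuclideanSpace ℝ (Fin (d i)))
        (v : Fin N → EuclideanSpace ℝ (Fin p))
        (z : Fin N → EuclideanSpace ℝ (Fin q)),
      ((∀ i, A i (x i) - b i = v i) ∧ (∀ i l, g i (x i) l ≤ z i l) ∧
        (∑ i, v i) = 0 ∧ (∑ i, z i) = 0) →
      ∑ i, f i (xstar i) ≤ ∑ i, f i (x i))
    ↔
    (∃ (u : Fin N → EuclideanSpace ℝ (Fin p)) (y : Fin N → EuclideanSpace ℝ (Fin q)),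
      -- local conditions
      (∀ i, ∃ (sf : EuclideanSpace ℝ (Fin (d i)))
          (sg : Fin q → EuclideanSpace ℝ (Fin (d i))),
        IsSubgradientAt (f i) sf (xstar i) ∧
        (∀ l, IsSubgradientAt (fun x => g i x l) (sg l) (xstar i)) ∧
        sf + ContinuousLinearMap.adjoint (A i) (u i) + ∑ l, y i l • sg l = 0) ∧
      (∀ i, A i (xstar i) - b i - vstar i = 0) ∧
      (∀ i, ⟪y i, g i (xstar i) - zstar i⟫ = 0) ∧
      (∀ i l, 0 ≤ y i l) ∧
      -- global conditions
      (∀ i j, u i = u j) ∧ (∀ i j, y i = y j) ∧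
      (∑ i, vstar i) = 0 ∧ (∑ i, zstar i) = 0) := by
  constructor
  · intro hopt
    obtain ⟨y, u, hy, hcomp, hmin⟩ :=
      exists_lagrangian_blocks_of_optimal hf hg hslater ⟨hfeq, hfineq, hvsum, hzsum⟩ hopt
    choose sf sg hsf hsg hstat using fun i =>
      (forall_le_iff_exists_subgradients (hf i) (hg i) hy (ContinuousLinearMap.adjoint (A i) u)
        (xstar i)).1 (hmin i)
    exact ⟨fun _ => u, fun _ => y, fun i => ⟨sf i, sg i, hsf i, hsg i, hstat i⟩,
      fun i => by rw [hfeq, sub_self], hcomp, fun _ => hy, fun _ _ => rfl, fun _ _ => rfl,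
      hvsum, hzsum⟩
  · rintro ⟨u, y, hstat, -, hcomp, hy, hu, hyc, -, -⟩
    rcases isEmpty_or_nonempty (Fin N) with _ | ⟨⟨i₀⟩⟩
    · simp
    intro x v z hfeas
    refine optimal_of_lagrangian_blocks (u := u i₀) (hy i₀) ⟨hfeq, hfineq, hvsum, hzsum⟩
      (fun i => hyc i i₀ ▸ hcomp i) (fun i => ?_) hfeas
    obtain ⟨sf, sg, hsf, hsg, h⟩ := hstat i
    exact (forall_le_iff_exists_subgradients (hf i) (hg i) (hy i₀) _ _).2
      ⟨sf, sg, hsf, hsg, by rwa [← hu i i₀, ← hyc i i₀]⟩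
end
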